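/- arXiv:2605.02042 — 2 statements merged into one kernel-verified Lean document; each statement's English description precedes it below -/
import Mathlib

section
/- Let H be a separable infinite-dimensional complex Hilbert space and let {f_n}_{n=0}^∞ be a sequence in H. If there exist an infinite-dimensional linear subspace D ⊆ H and a constant A > 0 such that A‖f‖² ≤ ∑_{n=0}^∞ |⟨f, f_n⟩|² < ∞ for every f ∈ D, then {f_n} is a CFC sequence; that is, there exists a bounded linear operator B on H such that {B f_n} is a Parseval frame for H. -/
/-!
On `D` the analysis operator `T x = (⟪fₙ, x⟫)ₙ` into `ℓ²(ℕ)` is bounded below, so its range is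
infinite-dimensional and contains an orthonormal family `vᵢ = T uᵢ`, indexed by the countable
index set of a Hilbert basis of `H`. The lower bound gives `‖∑ cᵢ uᵢ‖² ≤ A⁻¹ ∑ |cᵢ|²`, so
`S c = ∑ cᵢ uᵢ` is a bounded operator `ℓ² → H`, and coordinatewise `(⟪fₙ, S c⟫)ₙ = ∑ cᵢ vᵢ`,
a vector of norm `‖c‖`. With `C = S ∘ repr` the operator `B = C†` works, because
`⟪f, B fₙ⟫ = ⟪C f, fₙ⟫`.
-/

open scoped ComplexInnerProductSpace InnerProductSpace

section

variable {𝕜 : Type*} [RCLike 𝕜] {ι : Type*}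

theorem lp.hasSum_norm_sq {G : ι → Type*} [∀ i, NormedAddCommGroup (G i)] (f : lp G 2) :
    HasSum (fun i => ‖f i‖ ^ 2) (‖f‖ ^ 2) := by
  simpa using lp.hasSum_norm (p := 2) (by norm_num) f

theorem summable_of_norm_sum_sq_le {E : Type*} [NormedAddCommGroup E] [CompleteSpace E]
    {x : ι → E} {d : ι → ℝ} {M : ℝ} (hd : Summable d)
    (hb : ∀ s : Finset ι, ‖∑ i ∈ s, x i‖ ^ 2 ≤ M * ∑ i ∈ s, d i) : Summable x := by
  rw [summable_iff_vanishing_norm]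
  intro ε hε
  obtain ⟨s, hs⟩ := summable_iff_vanishing_norm.1 hd (ε ^ 2 / (|M| + 1)) (by positivity)
  refine ⟨s, fun t ht => lt_of_pow_lt_pow_left₀ 2 hε.le ?_⟩
  calc ‖∑ i ∈ t, x i‖ ^ 2 ≤ M * ∑ i ∈ t, d i := hb t
    _ ≤ (|M| + 1) * ‖∑ i ∈ t, d i‖ := by
      rw [Real.norm_eq_abs]
      exact (le_abs_self _).trans ((abs_mul _ _).trans_le (by gcongr; linarith))
    _ < (|M| + 1) * (ε ^ 2 / (|M| + 1)) := by gcongr; exact hs t ht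
    _ = ε ^ 2 := by field_simp

variable {E : Type*} [NormedAddCommGroup E] [InnerProductSpace 𝕜 E]

theorem Orthonormal.countable [TopologicalSpace.SeparableSpace E] {v : ι → E}
    (hv : Orthonormal 𝕜 v) : Countable ι := by
  refine Pairwise.countable_of_isOpen_disjoint (s := fun i => Metric.ball (v i) (1 / 2))
    (fun i j hij => Metric.ball_disjoint_ball ?_) (fun _ => Metric.isOpen_ball)
    (fun _ => Metric.nonempty_ball.2 (by norm_num))
  have h : ‖v i - v j‖ ^ 2 = 2 := by
    rw [@norm_sub_sq 𝕜, hv.1 i, hv.1 j, hv.2 hij]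
    norm_num
  rw [dist_eq_norm]
  nlinarith [norm_nonneg (v i - v j)]

variable (ι) in
theorem exists_orthonormal_of_not_finiteDimensional [Countable ι]
    (h : ¬ FiniteDimensional 𝕜 E) : ∃ v : ι → E, Orthonormal 𝕜 v := by
  let b := Module.Basis.ofVectorSpace 𝕜 E
  have : Infinite (Module.Basis.ofVectorSpaceIndex 𝕜 E) :=
    not_finite_iff_infinite.1 fun _ => h (Module.Finite.of_basis b)
  let e := Infinite.natEmbedding (Module.Basis.ofVectorSpaceIndex 𝕜 E)
  obtain ⟨j, hj⟩ := Countable.exists_injective_nat ι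
  exact ⟨_, (InnerProductSpace.gramSchmidtNormed_orthonormal
    (b.linearIndependent.comp e e.injective)).comp j hj⟩

variable (ι) in
theorem LinearMap.exists_orthonormal_comp_of_injective [Countable ι] {V : Type*}
    [AddCommGroup V] [Module 𝕜 V] (hV : ¬ FiniteDimensional 𝕜 V) {T : V →ₗ[𝕜] E}
    (hT : Function.Injective T) : ∃ u : ι → V, Orthonormal 𝕜 (T ∘ u) := by
  have hR : ¬ FiniteDimensional 𝕜 (LinearMap.range T) :=
    fun h => hV (LinearEquiv.ofInjective T hT).symm.finiteDimensional
  obtain ⟨v, hv⟩ := exists_orthonormal_of_not_finiteDimensional ι hR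
  choose u hu using fun i => (v i).2
  refine ⟨u, ?_⟩
  convert hv.comp_linearIsometry (LinearMap.range T).subtypeₗᵢ
  ext i
  simp [hu]

theorem Orthonormal.norm_sum_smul_sq {v : ι → E} (hv : Orthonormal 𝕜 v) (c : ι → 𝕜)
    (s : Finset ι) : ‖∑ i ∈ s, c i • v i‖ ^ 2 = ∑ i ∈ s, ‖c i‖ ^ 2 := by
  simpa using hv.orthogonalFamily.norm_sum c s

theorem exists_continuousLinearMap_hasSum_smul {F : Type*} [NormedAddCommGroup F]
    [NormedSpace 𝕜 F] [CompleteSpace F] (u : ι → F) {M : ℝ} (hM : 0 ≤ M)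
    (hu : ∀ (s : Finset ι) (c : ι → 𝕜), ‖∑ i ∈ s, c i • u i‖ ^ 2 ≤ M * ∑ i ∈ s, ‖c i‖ ^ 2) :
    ∃ S : lp (fun _ : ι => 𝕜) 2 →L[𝕜] F, ∀ c, HasSum (fun i => c i • u i) (S c) := by
  have hsum (c : lp (fun _ : ι => 𝕜) 2) : Summable fun i => c i • u i :=
    summable_of_norm_sum_sq_le (lp.hasSum_norm_sq c).summable (hu · c)
  let S : lp (fun _ : ι => 𝕜) 2 →ₗ[𝕜] F :=
    { toFun c := ∑' i, c i • u i
      map_add' c d := by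
        simp only [lp.coeFn_add, Pi.add_apply, add_smul]
        exact (hsum c).tsum_add (hsum d)
      map_smul' a c := by
        simp only [lp.coeFn_smul, Pi.smul_apply, smul_eq_mul, mul_smul, RingHom.id_apply]
        exact (hsum c).tsum_const_smul a }
  have hbound (c : lp (fun _ : ι => 𝕜) 2) : ‖S c‖ ≤ √M * ‖c‖ := by
    have hsq : ‖S c‖ ^ 2 ≤ M * ‖c‖ ^ 2 := by
      refine le_of_tendsto (((continuous_norm.pow 2).tendsto _).comp (hsum c).hasSum)
        (Filter.Eventually.of_forall fun s => (hu s c).trans ?_)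
      exact mul_le_mul_of_nonneg_left
        (sum_le_hasSum s (fun _ _ => by positivity) (lp.hasSum_norm_sq c)) hM
    refine le_of_pow_le_pow_left₀ two_ne_zero (by positivity) ?_
    rwa [mul_pow, Real.sq_sqrt hM]
  exact ⟨S.mkContinuous √M hbound, fun c => (hsum c).hasSum⟩

theorem hasSum_norm_inner_sq_of_orthonormal {fseq : ℕ → E} {u : ι → E}
    {v : ι → lp (fun _ : ℕ => 𝕜) 2} (hv : Orthonormal 𝕜 v)
    (huv : ∀ i n, v i n = ⟪fseq n, u i⟫_𝕜) {S : lp (fun _ : ι => 𝕜) 2 →L[𝕜] E}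
    (hS : ∀ c, HasSum (fun i => c i • u i) (S c)) (c : lp (fun _ : ι => 𝕜) 2) :
    HasSum (fun n => ‖⟪fseq n, S c⟫_𝕜‖ ^ 2) (‖c‖ ^ 2) := by
  let L := hv.orthogonalFamily.linearIsometry
  have hL (n : ℕ) : L c n = ⟪fseq n, S c⟫_𝕜 := by
    refine ((hv.orthogonalFamily.hasSum_linearIsometry c).mapL
      (lp.evalCLM 𝕜 (fun _ => 𝕜) 2 n)).unique ?_
    simpa [lp.evalCLM, huv, inner_smul_right] using (hS c).mapL (innerSL 𝕜 (fseq n))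
  simpa [hL, L.norm_map] using lp.hasSum_norm_sq (L c)

variable (ι) in
theorem exists_orthonormal_coeffs_of_lower_bound [Countable ι] {fseq : ℕ → E}
    {D : Submodule 𝕜 E} (hD : ¬ FiniteDimensional 𝕜 D) {A : ℝ} (hA : 0 < A)
    (hDb : ∀ f ∈ D, Summable (fun n => ‖⟪f, fseq n⟫_𝕜‖ ^ 2) ∧
      A * ‖f‖ ^ 2 ≤ ∑' n, ‖⟪f, fseq n⟫_𝕜‖ ^ 2) :
    ∃ (u : ι → E) (v : ι → lp (fun _ : ℕ => 𝕜) 2), Orthonormal 𝕜 v ∧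
      (∀ i n, v i n = ⟪fseq n, u i⟫_𝕜) ∧
      ∀ (s : Finset ι) (c : ι → 𝕜), ‖∑ i ∈ s, c i • u i‖ ^ 2 ≤ A⁻¹ * ∑ i ∈ s, ‖c i‖ ^ 2 := by
  have hmem (x : D) : Memℓp (fun n => ⟪fseq n, (x : E)⟫_𝕜) 2 :=
    memℓp_gen (by simpa [norm_inner_symm] using (hDb x x.2).1)
  let T : D →ₗ[𝕜] lp (fun _ : ℕ => 𝕜) 2 :=
    { toFun x := ⟨_, hmem x⟩
      map_add' x y := lp.ext <| funext fun n => inner_add_right _ _ _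
      map_smul' a x := lp.ext <| funext fun n => inner_smul_right _ _ _ }
  have hT (x : D) : A * ‖(x : E)‖ ^ 2 ≤ ‖T x‖ ^ 2 := by
    rw [(lp.hasSum_norm_sq (T x)).tsum_eq.symm]
    simpa [T, norm_inner_symm] using (hDb x x.2).2
  have hTinj : Function.Injective T := by
    refine (injective_iff_map_eq_zero T).2 fun x hx => ?_
    have h0 : ‖(x : E)‖ ^ 2 ≤ 0 := nonpos_of_mul_nonpos_right (by simpa [hx] using hT x) hA
    simpa using h0
  obtain ⟨u, hu⟩ := T.exists_orthonormal_comp_of_injective ι hD hTinj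
  refine ⟨fun i => u i, T ∘ u, hu, fun i n => rfl, fun s c => ?_⟩
  rw [le_inv_mul_iff₀ hA, ← hu.norm_sum_smul_sq]
  simpa using hT (∑ i ∈ s, c i • u i)

end

theorem stmt2_general {H : Type*} [NormedAddCommGroup H] [InnerProductSpace ℂ H]
    [CompleteSpace H] [TopologicalSpace.SeparableSpace H]
    (fseq : ℕ → H)
    (hD : ∃ D : Submodule ℂ H, ¬ FiniteDimensional ℂ D ∧
      ∃ A : ℝ, 0 < A ∧ ∀ f ∈ D,
        Summable (fun n => ‖⟪f, fseq n⟫‖ ^ 2) ∧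
        A * ‖f‖ ^ 2 ≤ ∑' n, ‖⟪f, fseq n⟫‖ ^ 2) :
    ∃ B : H →L[ℂ] H, ∀ f : H, HasSum (fun n => ‖⟪f, B (fseq n)⟫‖ ^ 2) (‖f‖ ^ 2) := by
  obtain ⟨D, hDinf, A, hA, hDb⟩ := hD
  obtain ⟨w, b, -⟩ := exists_hilbertBasis ℂ H
  have : Countable w := b.orthonormal.countable
  obtain ⟨u, v, hv, huv, hbessel⟩ := exists_orthonormal_coeffs_of_lower_bound w hDinf hA hDb
  obtain ⟨S, hS⟩ := exists_continuousLinearMap_hasSum_smul u (inv_nonneg.2 hA.le) hbessel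
  refine ⟨ContinuousLinearMap.adjoint (S ∘L (b.repr : H →L[ℂ] lp (fun _ : w => ℂ) 2)),
    fun f => ?_⟩
  convert hasSum_norm_inner_sq_of_orthonormal hv huv hS (b.repr f) using 3 with n
  · rw [ContinuousLinearMap.adjoint_inner_right, norm_inner_symm]
    rfl
  · exact (b.repr.norm_map f).symm

/-- If there exist an infinite-dimensional subspace `D ⊆ H` and `A > 0` with
`A‖f‖² ≤ ∑ |⟨f, f_n⟩|² < ∞` for all `f ∈ D`, then `{f_n}` is a CFC sequence: there is a
bounded operator `B` on `H` such that `{B f_n}` is a Parseval frame for `H`. -/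
theorem stmt2 {H : Type*} [NormedAddCommGroup H] [InnerProductSpace ℂ H]
    [CompleteSpace H] [TopologicalSpace.SeparableSpace H]
    (hH : ¬ FiniteDimensional ℂ H) (fseq : ℕ → H)
    (hD : ∃ D : Submodule ℂ H, ¬ FiniteDimensional ℂ D ∧
      ∃ A : ℝ, 0 < A ∧ ∀ f ∈ D,
        Summable (fun n => ‖⟪f, fseq n⟫‖ ^ 2) ∧
        A * ‖f‖ ^ 2 ≤ ∑' n, ‖⟪f, fseq n⟫‖ ^ 2) :
    ∃ B : H →L[ℂ] H, ∀ f : H, HasSum (fun n => ‖⟪f, B (fseq n)⟫‖ ^ 2) (‖f‖ ^ 2) :=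
  stmt2_general fseq hD
end

section
/- In ℓ²(ℕ) with standard orthonormal basis {e_n}_{n=0}^∞, the sequence {f_n}_{n=0}^∞ defined by f_0 = 0 and f_n = n·e_n for n ≥ 1 is an ICFC sequence (there exists an injective bounded linear operator B on ℓ²(ℕ) such that {B f_n} is a Parseval frame for ℓ²(ℕ)), yet the closed linear span of {f_n}_{n=0}^∞ is a proper subspace of ℓ²(ℕ). -/
/-!
Let `B a = ((a (k + 1) + a 0) / (k + 1))ₖ`: the weighted left shift `a ↦ (a (k + 1) / (k + 1))ₖ`
plus the rank-one map `a ↦ a 0 • (1 / (k + 1))ₖ`. Then `B f₀ = 0` and `B f_{m+1} = e_m`, so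
`(B fₙ)ₙ` is the standard basis with a zero vector prepended, a Parseval frame. The shift alone
kills `e₀`; with the rank-one term, `B a = 0` forces `a (k + 1) = -a 0` for every `k`, and
square-summability then gives `a = 0`. Every `fₙ` is orthogonal to `e₀`, so the closed span lies
in the kernel of `a ↦ a 0`.
-/

open scoped ComplexInnerProductSpace

/-- The sequence `f_0 = 0`, `f_n = n • e_n` in `ℓ²(ℕ)`. -/
noncomputable def stmt6Seq : ℕ → lp (fun _ : ℕ => ℂ) 2 :=
  fun n => if n = 0 then 0 else (n : ℂ) • lp.single 2 n 1

open scoped ENNReal lp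
open Function

section ParsevalFrame

variable (𝕜 : Type*) {E ι : Type*} [RCLike 𝕜] [NormedAddCommGroup E] [InnerProductSpace 𝕜 E]

def IsParsevalFrame (g : ι → E) : Prop :=
  ∀ f : E, HasSum (fun i => ‖inner 𝕜 f (g i)‖ ^ 2) (‖f‖ ^ 2)

variable {𝕜}

theorem HilbertBasis.isParsevalFrame (b : HilbertBasis ι 𝕜 E) : IsParsevalFrame 𝕜 b := by
  intro f
  have := lp.hasSum_norm (by norm_num : (0 : ℝ) < (2 : ℝ≥0∞).toReal) (b.repr f)
  simpa [b.repr_apply_apply, norm_inner_symm] using this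

theorem isParsevalFrame_nat_iff_succ {g : ℕ → E} (h0 : g 0 = 0) :
    IsParsevalFrame 𝕜 g ↔ IsParsevalFrame 𝕜 (fun n => g (n + 1)) :=
  forall_congr' fun f => by
    rw [← hasSum_nat_add_iff' 1]
    simp [h0]

theorem isParsevalFrame_lp_single [DecidableEq ι] :
    IsParsevalFrame 𝕜 (fun i : ι => lp.single 2 i (1 : 𝕜)) := by
  convert (default : HilbertBasis ι 𝕜 ℓ²(ι, 𝕜)).isParsevalFrame with i
  rw [← HilbertBasis.repr_symm_single]
  rfl

end ParsevalFrame

theorem Submodule.topologicalClosure_ne_top_of_le_ker {𝕜 E : Type*} [Semiring 𝕜]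
    [TopologicalSpace 𝕜] [T1Space 𝕜] [TopologicalSpace E] [AddCommMonoid E] [Module 𝕜 E]
    [ContinuousConstSMul 𝕜 E] [ContinuousAdd E]
    {K : Submodule 𝕜 E} {φ : E →L[𝕜] 𝕜} (hφ : φ ≠ 0) (hK : K ≤ LinearMap.ker (φ : E →ₗ[𝕜] 𝕜)) :
    K.topologicalClosure ≠ ⊤ := by
  intro htop
  apply hφ
  ext x
  have := K.topologicalClosure_minimal hK φ.isClosed_ker
  rw [htop] at this
  simpa using this (Submodule.mem_top (x := x))

namespace lp

variable {α β 𝕜 E : Type*} [NormedField 𝕜] [NormedAddCommGroup E] [NormedSpace 𝕜 E]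
  {p : ℝ≥0∞}

theorem sum_rpow_comp_le_norm_rpow (hp : 0 < p.toReal) (a : lp (fun _ : α => E) p) {σ : β → α}
    (hσ : Injective σ) (s : Finset β) :
    ∑ i ∈ s, ‖a (σ i)‖ ^ p.toReal ≤ ‖a‖ ^ p.toReal := by
  classical
  calc ∑ i ∈ s, ‖a (σ i)‖ ^ p.toReal = ∑ j ∈ s.image σ, ‖a j‖ ^ p.toReal :=
        (Finset.sum_image (f := fun j => ‖a j‖ ^ p.toReal) hσ.injOn).symm
    _ ≤ ‖a‖ ^ p.toReal := lp.sum_rpow_le_norm_rpow hp a _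

theorem eq_zero_of_forall_apply_succ_eq (hp : 0 < p.toReal) (a : lp (fun _ : ℕ => E) p) {c : E}
    (h : ∀ k, a (k + 1) = c) : c = 0 := by
  have hsum : Summable fun _ : ℕ => ‖c‖ ^ p.toReal := by
    simpa [h] using (summable_nat_add_iff 1).2 ((lp.memℓp a).summable hp)
  simpa [Real.rpow_eq_zero (norm_nonneg c) hp.ne'] using (summable_const_iff _).1 hsum

variable [Fact (1 ≤ p)]

@[simp]
theorem evalCLM_apply (a : lp (fun _ : α => E) p) (i : α) : evalCLM 𝕜 _ p i a = a i := rfl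

variable (p) in
noncomputable def weightedComp (hp : p ≠ ∞) {σ : β → α} (hσ : Injective σ) (w : β → 𝕜)
    (hw : ∀ i, ‖w i‖ ≤ 1) : lp (fun _ : α => E) p →L[𝕜] lp (fun _ : β => E) p :=
  have hp' : 0 < p.toReal := ENNReal.toReal_pos (zero_lt_one.trans_le Fact.out).ne' hp
  have hle (a : lp (fun _ : α => E) p) (s : Finset β) :
      ∑ i ∈ s, ‖w i • a (σ i)‖ ^ p.toReal ≤ ‖a‖ ^ p.toReal := by
    refine (Finset.sum_le_sum fun i _ => ?_).trans (sum_rpow_comp_le_norm_rpow hp' a hσ s)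
    rw [norm_smul]
    gcongr
    exact mul_le_of_le_one_left (norm_nonneg _) (hw i)
  LinearMap.mkContinuous
    { toFun a := ⟨fun i => w i • a (σ i), memℓp_gen' (hle a)⟩
      map_add' a b := by ext i; exact smul_add _ _ _
      map_smul' c a := by ext i; exact smul_comm _ _ _ }
    1 fun a => by
      rw [one_mul]
      exact lp.norm_le_of_forall_sum_le hp' (norm_nonneg a) (hle a)

@[simp]
theorem weightedComp_apply (hp : p ≠ ∞) {σ : β → α} (hσ : Injective σ) (w : β → 𝕜)
    (hw : ∀ i, ‖w i‖ ≤ 1) (a : lp (fun _ : α => E) p) (i : β) :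
    weightedComp p hp hσ w hw a i = w i • a (σ i) := rfl

end lp

theorem Complex.norm_natCast_add_one (k : ℕ) : ‖(k : ℂ) + 1‖ = k + 1 := by
  exact_mod_cast Complex.norm_natCast (k + 1)

theorem norm_inv_natCast_add_one_le_one (k : ℕ) : ‖((k : ℂ) + 1)⁻¹‖ ≤ 1 := by
  rw [norm_inv, Complex.norm_natCast_add_one]
  exact inv_le_one_of_one_le₀ (by simp)

theorem memℓp_inv_natCast_add_one : Memℓp (fun k : ℕ => ((k : ℂ) + 1)⁻¹) 2 := by
  refine memℓp_gen ?_
  simpa [norm_inv, Complex.norm_natCast_add_one] using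
    (summable_nat_add_iff 1).2 (Real.summable_nat_pow_inv.2 one_lt_two)

noncomputable def icfcOperator : ℓ²(ℕ, ℂ) →L[ℂ] ℓ²(ℕ, ℂ) :=
  lp.weightedComp 2 ENNReal.ofNat_ne_top Nat.succ_injective (fun k => ((k : ℂ) + 1)⁻¹)
      norm_inv_natCast_add_one_le_one +
    (lp.evalCLM ℂ _ 2 0).smulRight ⟨_, memℓp_inv_natCast_add_one⟩

theorem icfcOperator_apply (a : ℓ²(ℕ, ℂ)) (k : ℕ) :
    icfcOperator a k = ((k : ℂ) + 1)⁻¹ * (a (k + 1) + a 0) := by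
  simp only [icfcOperator, add_apply, ContinuousLinearMap.smulRight_apply,
    lp.coeFn_add, lp.coeFn_smul, Pi.add_apply, Pi.smul_apply, lp.weightedComp_apply,
    lp.evalCLM_apply, smul_eq_mul, Nat.succ_eq_add_one]
  ring

theorem stmt6Seq_succ_apply (m k : ℕ) :
    stmt6Seq (m + 1) k = if k = m + 1 then (m : ℂ) + 1 else 0 := by
  simp [stmt6Seq, lp.single_apply, Pi.single_apply]

theorem stmt6Seq_apply_zero (n : ℕ) : stmt6Seq n 0 = 0 := by
  cases n with
  | zero => simp [stmt6Seq]
  | succ m => simp [stmt6Seq_succ_apply]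

theorem icfcOperator_stmt6Seq_succ (m : ℕ) :
    icfcOperator (stmt6Seq (m + 1)) = lp.single 2 m 1 := by
  ext k
  rw [icfcOperator_apply, stmt6Seq_apply_zero, stmt6Seq_succ_apply, lp.single_apply,
    Pi.single_apply]
  by_cases hk : k = m
  · subst hk
    simpa using inv_mul_cancel₀ (Nat.cast_add_one_ne_zero k)
  · simp [hk]

theorem icfcOperator_injective : Injective icfcOperator := by
  refine (injective_iff_map_eq_zero _).2 fun a ha => ?_
  have hsucc (k : ℕ) : a (k + 1) = -a 0 := by
    have := congrArg (fun b : ℓ²(ℕ, ℂ) => b k) ha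
    simp only [icfcOperator_apply, lp.coeFn_zero, Pi.zero_apply, mul_eq_zero, inv_eq_zero] at this
    exact eq_neg_of_add_eq_zero_left (this.resolve_left (Nat.cast_add_one_ne_zero k))
  have h0 : a 0 = 0 := neg_eq_zero.1 (lp.eq_zero_of_forall_apply_succ_eq (by norm_num) a hsucc)
  ext k
  cases k with
  | zero => exact h0
  | succ k => simp [hsucc, h0]

/-- The sequence `f_0 = 0`, `f_n = n e_n` (n ≥ 1) in `ℓ²(ℕ)` is an ICFC sequence
(some injective bounded operator maps it to a Parseval frame), yet its closed linear span is a
proper subspace of `ℓ²(ℕ)`. -/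
theorem stmt6 :
    (∃ B : lp (fun _ : ℕ => ℂ) 2 →L[ℂ] lp (fun _ : ℕ => ℂ) 2, Function.Injective B ∧
      ∀ f : lp (fun _ : ℕ => ℂ) 2,
        HasSum (fun n => ‖⟪f, B (stmt6Seq n)⟫‖ ^ 2) (‖f‖ ^ 2)) ∧
    (Submodule.span ℂ (Set.range stmt6Seq)).topologicalClosure ≠ ⊤ := by
  refine ⟨⟨icfcOperator, icfcOperator_injective, ?_⟩, ?_⟩
  · have hframe : IsParsevalFrame ℂ fun n => icfcOperator (stmt6Seq n) := by
      rw [isParsevalFrame_nat_iff_succ (by simp [stmt6Seq])]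
      simpa only [icfcOperator_stmt6Seq_succ] using isParsevalFrame_lp_single
    exact hframe
  · refine Submodule.topologicalClosure_ne_top_of_le_ker (φ := lp.evalCLM ℂ _ 2 0) ?_ ?_
    · exact DFunLike.ne_iff.2 ⟨lp.single 2 0 1, by simp⟩
    · exact Submodule.span_le.2 (Set.range_subset_iff.2 stmt6Seq_apply_zero)
end
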